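/- Let Da, λ₁, λ₂, φ_f, φ_s, a₁, a₂ be positive real constants, let α > 0 satisfy Da·(2 + λ₁ + φ_f²/a₁)·α² = 1, let v(x) = cosh(α(1−x))/cosh(α), and let P(x) = (a₂ − φ_f·v'(x))/a₁. Define c_s := −(φ_f·φ_s·α²/a₁ + 1/Da) / ((2 + λ₂)·α²), D := −c_s·v(0), C := c_s·(v(0) − v(1)), and u(x) := c_s·v(x) + C·x + D. Then for all x ∈ [0,1] the solid displacement u satisfies the reduced one-dimensional solid momentum equation without thermal coupling (Ξ = 0): −(2 + λ₂)·u''(x) + φ_s·P'(x) − v(x)/Da = 0, together with the clamped boundary conditions u(0) = 0 and u(1) = 0. -/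

import Mathlib

/-! The profile `v x = cosh (α (1 - x)) / cosh α` satisfies `v'' = α² v`, so `P' = -(φ_f α² / a₁) v`
and, for `u = c_s v + C x + D`, `u'' = c_s α² v`. The momentum balance is then `v` times
`-(2 + λ₂) c_s α² - φ_f φ_s α² / a₁ - 1 / Da`, which vanishes by the choice of `c_s`; the affine
part `C x + D` is invisible to `u''` and is fitted to the clamped ends. -/

open Real

lemma hasDerivAt_mul_one_sub (α x : ℝ) : HasDerivAt (fun y => α * (1 - y)) (-α) x := by
  simpa using ((hasDerivAt_id x).const_sub 1).const_mul α

lemma hasDerivAt_cosh_mul_one_sub (α x : ℝ) :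
    HasDerivAt (fun y => cosh (α * (1 - y))) (-α * sinh (α * (1 - x))) x :=
  (hasDerivAt_mul_one_sub α x).cosh.congr_deriv (by ring)

lemma hasDerivAt_sinh_mul_one_sub (α x : ℝ) :
    HasDerivAt (fun y => sinh (α * (1 - y))) (-α * cosh (α * (1 - x))) x :=
  (hasDerivAt_mul_one_sub α x).sinh.congr_deriv (by ring)

lemma deriv_deriv_cosh_mul_one_sub_div (α k x : ℝ) :
    deriv (deriv fun y => cosh (α * (1 - y)) / k) x = α ^ 2 * (cosh (α * (1 - x)) / k) := by
  have hderiv : deriv (fun y => cosh (α * (1 - y)) / k) = fun y => -α * sinh (α * (1 - y)) / k :=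
    funext fun y => ((hasDerivAt_cosh_mul_one_sub α y).div_const k).deriv
  rw [hderiv, (((hasDerivAt_sinh_mul_one_sub α x).const_mul (-α)).div_const k).deriv]
  ring

lemma deriv_deriv_const_mul_add_affine {f : ℝ → ℝ} (hf : Differentiable ℝ f) (c a b x : ℝ) :
    deriv (deriv fun y => c * f y + a * y + b) x = c * deriv (deriv f) x := by
  have hderiv : deriv (fun y => c * f y + a * y + b) = fun y => c * deriv f y + a := by
    funext y
    exact ((((hf y).hasDerivAt.const_mul c).add ((hasDerivAt_id y).const_mul a)).add_const b
      ).deriv.trans (by simp)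
  rw [hderiv, deriv_add_const, deriv_const_mul_field']

theorem stmt_9_general
    (Da lam2 phif phis a1 a2 : ℝ)
    (hlam2 : 0 < lam2)
    (α : ℝ) (hα : 0 < α) :
    let v : ℝ → ℝ := fun x => Real.cosh (α * (1 - x)) / Real.cosh α
    let P : ℝ → ℝ := fun x => (a2 - phif * deriv v x) / a1
    let cs : ℝ := -(phif * phis * α ^ 2 / a1 + 1 / Da) / ((2 + lam2) * α ^ 2)
    let D : ℝ := -cs * v 0
    let C : ℝ := cs * (v 0 - v 1)
    let u : ℝ → ℝ := fun x => cs * v x + C * x + D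
    (∀ x ∈ Set.Icc (0 : ℝ) 1,
      -(2 + lam2) * deriv (deriv u) x + phis * deriv P x - v x / Da = 0) ∧
    u 0 = 0 ∧ u 1 = 0 := by
  intro v P cs D C u
  have hv'' (x : ℝ) : deriv (deriv v) x = α ^ 2 * v x := deriv_deriv_cosh_mul_one_sub_div α _ x
  have hv : Differentiable ℝ v := fun x =>
    ((hasDerivAt_cosh_mul_one_sub α x).div_const _).differentiableAt
  have hu'' (x : ℝ) : deriv (deriv u) x = cs * (α ^ 2 * v x) := by
    rw [deriv_deriv_const_mul_add_affine hv, hv'']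
  have hP' (x : ℝ) : deriv P x = -(phif * (α ^ 2 * v x)) / a1 := by
    simp only [P, deriv_div_const, deriv_const_sub, deriv_const_mul_field', hv'']
  have hcs : -(2 + lam2) * cs * α ^ 2 = phif * phis * α ^ 2 / a1 + 1 / Da := by
    have : (2 + lam2) * α ^ 2 ≠ 0 := by positivity
    simp only [cs]
    field_simp
  refine ⟨fun x _ => ?_, by simp only [u, D, C]; ring, by simp only [u, D, C]; ring⟩
  rw [hu'' x, hP' x]
  linear_combination v x * hcs

/-- Exact solution for the solid displacement in the reduced 1D model without
thermal coupling (`Ξ = 0`): `u = c_s·v + C·x + D` solves the solid momentum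
balance `−(2+λ₂)u'' + φ_s·P' − v/Da = 0` with clamped ends `u(0)=u(1)=0`. -/
theorem stmt_9
    (Da lam1 lam2 phif phis a1 a2 : ℝ)
    (hDa : 0 < Da) (hlam1 : 0 < lam1) (hlam2 : 0 < lam2)
    (hphif : 0 < phif) (hphis : 0 < phis) (ha1 : 0 < a1) (ha2 : 0 < a2)
    (α : ℝ) (hα : 0 < α)
    (hαeq : Da * (2 + lam1 + phif ^ 2 / a1) * α ^ 2 = 1) :
    let v : ℝ → ℝ := fun x => Real.cosh (α * (1 - x)) / Real.cosh α
    let P : ℝ → ℝ := fun x => (a2 - phif * deriv v x) / a1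
    let cs : ℝ := -(phif * phis * α ^ 2 / a1 + 1 / Da) / ((2 + lam2) * α ^ 2)
    let D : ℝ := -cs * v 0
    let C : ℝ := cs * (v 0 - v 1)
    let u : ℝ → ℝ := fun x => cs * v x + C * x + D
    (∀ x ∈ Set.Icc (0 : ℝ) 1,
      -(2 + lam2) * deriv (deriv u) x + phis * deriv P x - v x / Da = 0) ∧
    u 0 = 0 ∧ u 1 = 0 :=
  stmt_9_general Da lam2 phif phis a1 a2 hlam2 α hα
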